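/- arXiv:0707.2605 — 4 statements merged into one kernel-verified Lean document; each statement's English description precedes it below -/
import Mathlib

section
/- Let X be a topological space, U an open subset, 𝔟 a basis of U, and δ a finite collection of open subsets of U. Then 𝔟_δ := {B ∈ 𝔟 | B ⊆ ⋃δ → ∃ D ∈ δ, B ⊆ D} is a basis of U. -/
/-- `𝔟` is a basis of open sets for the open set `U`. -/
def IsBasisOfOpen {X : Type*} [TopologicalSpace X] (U : Set X) (𝔟 : Set (Set X)) : Prop :=
  (∀ B ∈ 𝔟, IsOpen B ∧ B ⊆ U) ∧
  ∀ V : Set X, IsOpen V → V ⊆ U → ∃ S ⊆ 𝔟, V = ⋃₀ S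

/-- for a basis `𝔟` of an open `U` and a finite collection `δ` of open
subsets of `U`, `𝔟_δ := {B ∈ 𝔟 | B ⊆ ⋃δ → ∃ D ∈ δ, B ⊆ D}` is a basis of `U`. -/
theorem stmt3 {X : Type*} [TopologicalSpace X] (U : Set X) (hU : IsOpen U)
    (𝔟 : Set (Set X)) (h𝔟 : IsBasisOfOpen U 𝔟)
    (δ : Set (Set X)) (hδfin : δ.Finite) (hδ : ∀ D ∈ δ, IsOpen D ∧ D ⊆ U) :
    IsBasisOfOpen U {B ∈ 𝔟 | B ⊆ ⋃₀ δ → ∃ D ∈ δ, B ⊆ D} := by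
  obtain ⟨h1, h2⟩ := h𝔟
  have hpt : ∀ W : Set X, IsOpen W → W ⊆ U → ∀ x ∈ W, ∃ B ∈ 𝔟, x ∈ B ∧ B ⊆ W := by
    intro W hW hWU x hx
    obtain ⟨S, hS𝔟, hSW⟩ := h2 W hW hWU
    rw [hSW] at hx
    obtain ⟨B, hBS, hxB⟩ := hx
    exact ⟨B, hS𝔟 hBS, hxB, hSW ▸ Set.subset_sUnion_of_mem hBS⟩
  constructor
  · exact fun B hB => h1 B hB.1
  · intro V hV hVU
    have hpt' : ∀ x ∈ V, ∃ B, (B ∈ 𝔟 ∧ (B ⊆ ⋃₀ δ → ∃ D ∈ δ, B ⊆ D)) ∧ x ∈ B ∧ B ⊆ V := by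
      intro x hx
      by_cases hxδ : x ∈ ⋃₀ δ
      · obtain ⟨D, hD, hxD⟩ := hxδ
        obtain ⟨B, hB, hxB, hBW⟩ := hpt (V ∩ D) (hV.inter (hδ D hD).1)
          (fun y hy => hVU hy.1) x ⟨hx, hxD⟩
        exact ⟨B, ⟨hB, fun _ => ⟨D, hD, hBW.trans Set.inter_subset_right⟩⟩,
          hxB, hBW.trans Set.inter_subset_left⟩
      · obtain ⟨B, hB, hxB, hBV⟩ := hpt V hV hVU x hx
        exact ⟨B, ⟨hB, fun hc => absurd (hc hxB) hxδ⟩, hxB, hBV⟩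
    refine ⟨{B | (B ∈ 𝔟 ∧ (B ⊆ ⋃₀ δ → ∃ D ∈ δ, B ⊆ D)) ∧ B ⊆ V},
      fun B hB => hB.1, ?_⟩
    apply Set.Subset.antisymm
    · intro x hx
      obtain ⟨B, hB, hxB, hBV⟩ := hpt' x hx
      exact ⟨B, ⟨hB, hBV⟩, hxB⟩
    · rintro x ⟨B, hB, hxB⟩
      exact hB.2 hxB
end

section
/- Let X be a topological space with opens U, V, let 𝔟 be a basis of X, and let δ₁,…,δₙ (resp. ε₁,…,ε_m) be finite collections of opens of U (resp. of V). If (𝔟|_U)_{δ₁,…,δₙ} and (𝔟|_V)_{ε₁,…,ε_m} restrict to the same collection on U ∩ V, then their union equals (𝔟|_{U∪V})_{δ₁,…,δₙ,ε₁,…,ε_m,{U,V}}. -/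
/-- `𝔠|_W = {B ∈ 𝔠 | B ⊆ W}`. -/
def restr {X : Type*} (𝔠 : Set (Set X)) (W : Set X) : Set (Set X) := {B ∈ 𝔠 | B ⊆ W}

/-- `𝔠_δ = {B ∈ 𝔠 | B ⊆ ⋃δ → ∃ D ∈ δ, B ⊆ D}`. -/
def subB {X : Type*} (𝔠 : Set (Set X)) (δ : Set (Set X)) : Set (Set X) :=
  {B ∈ 𝔠 | B ⊆ ⋃₀ δ → ∃ D ∈ δ, B ⊆ D}

/-- Iterated subscripts: `𝔠_{δ₁,…,δₙ}` for a list `[δ₁,…,δₙ]` of collections. -/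
def subsB {X : Type*} (𝔠 : Set (Set X)) (L : List (Set (Set X))) : Set (Set X) :=
  L.foldl subB 𝔠

lemma mem_subsB {X : Type*} (𝔠 : Set (Set X)) (L : List (Set (Set X))) (B : Set X) :
    B ∈ subsB 𝔠 L ↔ B ∈ 𝔠 ∧ ∀ δ ∈ L, B ⊆ ⋃₀ δ → ∃ D ∈ δ, B ⊆ D := by
  induction L generalizing 𝔠 with
  | nil => simp [subsB]
  | cons δ L ih =>
    simp only [subsB, List.foldl_cons] at *
    rw [ih]
    simp only [subB, Set.mem_setOf_eq, List.mem_cons]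
    constructor
    · rintro ⟨⟨h1, h2⟩, h3⟩
      exact ⟨h1, fun ε hε => by rcases hε with rfl | hε; exacts [h2, h3 ε hε]⟩
    · rintro ⟨h1, h2⟩
      exact ⟨⟨h1, h2 δ (Or.inl rfl)⟩, fun ε hε => h2 ε (Or.inr hε)⟩

/-- for a basis `𝔟` of `X`, opens `U, V`, finite collections
`δ₁,…,δₙ` of opens of `U` and `ε₁,…,ε_m` of opens of `V`, if
`(𝔟|_U)_{δ₁,…,δₙ}` and `(𝔟|_V)_{ε₁,…,ε_m}` restrict to the same collection on
`U ∩ V`, then their union equals `(𝔟|_{U∪V})_{δ₁,…,δₙ,ε₁,…,ε_m,{U,V}}`. -/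
theorem stmt6 {X : Type*} [TopologicalSpace X] (U V : Set X)
    (hU : IsOpen U) (hV : IsOpen V)
    (𝔟 : Set (Set X)) (h𝔟 : IsBasisOfOpen (Set.univ : Set X) 𝔟)
    (L M : List (Set (Set X)))
    (hL : ∀ δ ∈ L, δ.Finite ∧ ∀ D ∈ δ, IsOpen D ∧ D ⊆ U)
    (hM : ∀ ε ∈ M, ε.Finite ∧ ∀ D ∈ ε, IsOpen D ∧ D ⊆ V)
    (hagree : restr (subsB (restr 𝔟 U) L) (U ∩ V)
      = restr (subsB (restr 𝔟 V) M) (U ∩ V)) :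
    subsB (restr 𝔟 U) L ∪ subsB (restr 𝔟 V) M
      = subsB (restr 𝔟 (U ∪ V)) (L ++ M ++ [{U, V}]) := by
  have hUV : ⋃₀ ({U, V} : Set (Set X)) = U ∪ V := by simp
  have hag : ∀ B : Set X, B ∈ restr (subsB (restr 𝔟 U) L) (U ∩ V)
      ↔ B ∈ restr (subsB (restr 𝔟 V) M) (U ∩ V) := fun B => by rw [hagree]
  ext B
  simp only [Set.mem_union, mem_subsB, restr, Set.mem_setOf_eq, List.mem_append,
    List.mem_singleton] at *
  constructor
  · rintro (⟨⟨⟨hB, hBU⟩, hLc⟩⟩ | ⟨⟨hB, hBV⟩, hMc⟩)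
    · refine ⟨⟨hB, hBU.trans Set.subset_union_left⟩, ?_⟩
      rintro δ ((hδ | hδ) | rfl)
      · exact hLc δ hδ
      · intro hsub
        have hδV : ⋃₀ δ ⊆ V := Set.sUnion_subset fun D hD => (hM δ hδ).2 D hD |>.2
        have hBUV : B ⊆ U ∩ V := Set.subset_inter hBU (hsub.trans hδV)
        have := (hag B).1 ⟨⟨⟨hB, hBU⟩, hLc⟩, hBUV⟩
        exact this.1.2 δ hδ hsub
      · rw [hUV]; intro _; exact ⟨U, Or.inl rfl, hBU⟩
    · refine ⟨⟨hB, hBV.trans Set.subset_union_right⟩, ?_⟩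
      rintro δ ((hδ | hδ) | rfl)
      · intro hsub
        have hδU : ⋃₀ δ ⊆ U := Set.sUnion_subset fun D hD => (hL δ hδ).2 D hD |>.2
        have hBUV : B ⊆ U ∩ V := Set.subset_inter (hsub.trans hδU) hBV
        have := (hag B).2 ⟨⟨⟨hB, hBV⟩, hMc⟩, hBUV⟩
        exact this.1.2 δ hδ hsub
      · exact hMc δ hδ
      · rw [hUV]; intro _; exact ⟨V, Or.inr rfl, hBV⟩
  · rintro ⟨⟨hB, hBUV⟩, hc⟩
    have hor : B ⊆ U ∨ B ⊆ V := by
      have h := hc {U, V} (Or.inr rfl) (by rw [hUV]; exact hBUV)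
      rcases h with ⟨D, hD, hBD⟩
      rcases hD with rfl | rfl
      · exact Or.inl hBD
      · exact Or.inr hBD
    rcases hor with hBU | hBV
    · exact Or.inl ⟨⟨hB, hBU⟩, fun δ hδ => hc δ (Or.inl (Or.inl hδ))⟩
    · exact Or.inr ⟨⟨hB, hBV⟩, fun δ hδ => hc δ (Or.inl (Or.inr hδ))⟩
end

section
/- Let X be a topological space and F a presheaf of abelian groups on the poset qc(X) of quasi-compact open subsets of X (with the induced Grothendieck topology). If F satisfies the sheaf condition with respect to all finite coverings of quasi-compact opens by quasi-compact opens, then F is a sheaf on qc(X), i.e. satisfies the sheaf condition for arbitrary coverings. -/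
open CategoryTheory TopologicalSpace Opposite

/-- The poset `qc(X)` of quasi-compact open subsets of `X`. -/
def QC (X : TopCat) : Type := {U : Opens X // IsCompact (U : Set X)}

instance {X : TopCat} : Preorder (QC X) := Subtype.preorder _

/-- The sheaf condition for a presheaf `F` on the poset `qc(X)` with respect to a
covering of `U` by a family `V` of quasi-compact opens contained in `U` whose
union is `U`.  Compatibility of the local sections is expressed over all
quasi-compact opens contained in two members of the family. -/
def QCSheafCondFor {X : TopCat} (F : (QC X)ᵒᵖ ⥤ AddCommGrpCat) {ι : Type}
    (U : QC X) (V : ι → QC X) (hle : ∀ i, V i ≤ U)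
    (_ : (⋃ i, ((V i).1 : Set X)) = (U.1 : Set X)) : Prop :=
  ∀ s : ∀ i, F.obj (op (V i)),
    (∀ (W : QC X) (i j) (h1 : W ≤ V i) (h2 : W ≤ V j),
      F.map (homOfLE h1).op (s i) = F.map (homOfLE h2).op (s j)) →
    ∃! t : F.obj (op U), ∀ i, F.map (homOfLE (hle i)).op t = s i

/-- a presheaf of abelian groups on `qc(X)` satisfying the sheaf
condition for all finite coverings (of quasi-compact opens by quasi-compact
opens) satisfies the sheaf condition for arbitrary coverings. -/
theorem stmt10 {X : TopCat} (F : (QC X)ᵒᵖ ⥤ AddCommGrpCat)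
    (hfin : ∀ (ι : Type) (_ : Finite ι) (U : QC X) (V : ι → QC X)
      (hle : ∀ i, V i ≤ U) (hcov : (⋃ i, ((V i).1 : Set X)) = (U.1 : Set X)),
      QCSheafCondFor F U V hle hcov) :
    ∀ (ι : Type) (U : QC X) (V : ι → QC X)
      (hle : ∀ i, V i ≤ U) (hcov : (⋃ i, ((V i).1 : Set X)) = (U.1 : Set X)),
      QCSheafCondFor F U V hle hcov := by
  intro ι U V hle hcov s hs
  -- finite subcover
  obtain ⟨t0, ht0⟩ := U.2.elim_finite_subcover (fun i => ((V i).1 : Set X))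
    (fun i => (V i).1.2) (by rw [hcov])
  set ι₁ := {i // i ∈ t0} with hι₁
  have hcov₁ : (⋃ j : ι₁, ((V j.1).1 : Set X)) = (U.1 : Set X) := by
    apply le_antisymm
    · exact Set.iUnion_subset fun j => hle j.1
    · intro x hx
      obtain ⟨Vi, ⟨i, rfl⟩, hxi⟩ := ht0 hx
      simp only [Set.mem_iUnion] at hxi ⊢
      obtain ⟨hi, hxi⟩ := hxi
      exact ⟨⟨i, hi⟩, hxi⟩
  have hle₁ : ∀ j : ι₁, V j.1 ≤ U := fun j => hle j.1
  obtain ⟨t, ht, huniq⟩ := hfin ι₁ (Finite.of_fintype _) U (fun j => V j.1) hle₁ hcov₁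
    (fun j => s j.1) (fun W a b h1 h2 => hs W a.1 b.1 h1 h2)
  refine ⟨t, fun i => ?_, fun t' ht' => huniq t' (fun j => ht' j.1)⟩
  -- enlarge the finite family by V i
  set idx : Option ι₁ → ι := fun o => o.elim i (fun j => j.1) with hidx
  have hle₂ : ∀ o, V (idx o) ≤ U := fun o => hle _
  have hcov₂ : (⋃ o : Option ι₁, ((V (idx o)).1 : Set X)) = (U.1 : Set X) := by
    apply le_antisymm
    · exact Set.iUnion_subset fun o => hle _
    · rw [← hcov₁]
      exact Set.iUnion_subset fun j => Set.subset_iUnion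
        (fun o : Option ι₁ => ((V (idx o)).1 : Set X)) (some j)
  obtain ⟨t', ht', _⟩ := hfin (Option ι₁) (Finite.of_fintype _) U (fun o => V (idx o)) hle₂ hcov₂
    (fun o => s (idx o)) (fun W a b h1 h2 => hs W (idx a) (idx b) h1 h2)
  have htt' : t' = t := huniq t' (fun j => ht' (some j))
  rw [← htt']
  exact ht' none
end

section
/- Let X be a topological space, F a presheaf of abelian groups on X with sheafification a: F → aF. If F satisfies the sheaf condition on a basis B of X closed under the coverings used (i.e., F restricted to B is a sheaf for the induced topology), then for every U ∈ B the map F(U) → aF(U) is an isomorphism. -/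
open CategoryTheory TopologicalSpace Opposite

/-- let `F` be a presheaf of abelian groups on `X` and `B` a basis of
the topology of `X`.  If `F` satisfies the sheaf condition on `B` (for coverings of
members of `B` by members of `B`), then for every `U ∈ B` the canonical map
`F(U) → aF(U)` to the sheafification is an isomorphism. -/
theorem stmt12 (X : TopCat) (F : TopCat.Presheaf AddCommGrpCat X)
    (B : Set (Opens X)) (hB : Opens.IsBasis B)
    (hsheaf : ∀ U ∈ B, ∀ (ι : Type) (V : ι → Opens X),
      (∀ i, V i ∈ B) → (∀ i, V i ≤ U) → (∀ x ∈ U, ∃ i, x ∈ V i) →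
      ∀ s : ∀ i, F.obj (op (V i)),
        (∀ W ∈ B, ∀ (i j) (h1 : W ≤ V i) (h2 : W ≤ V j),
          F.map (homOfLE h1).op (s i) = F.map (homOfLE h2).op (s j)) →
        ∃! t : F.obj (op U), ∀ (i) (hi : V i ≤ U), F.map (homOfLE hi).op t = s i) :
    ∀ U ∈ B, IsIso ((toSheafify (Opens.grothendieckTopology X) F).app (op U)) := by
  set J := Opens.grothendieckTopology X with hJ
  set θ := toSheafify J F with hθ
  -- the sheafification as a sheaf on the space
  let G : TopCat.Sheaf AddCommGrpCat X :=
    ⟨sheafify J F, ((presheafToSheaf J AddCommGrpCat).obj F).cond⟩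
  -- injectivity on every member of the basis
  have inj : ∀ W ∈ B, Function.Injective (θ.app (op W)) := by
    intro W hW x y h
    have hmem : Presheaf.equalizerSieve x y ∈ J W :=
      Presheaf.equalizerSieve_mem J θ x y h
    -- index type for a covering of `W` by basis elements inside the sieve
    let ι : Type := {V : Opens X // V ∈ B ∧ ∃ hVW : V ≤ W,
      (Presheaf.equalizerSieve x y).arrows (homOfLE hVW)}
    let V : ι → Opens X := fun i => i.1
    have hVB : ∀ i, V i ∈ B := fun i => i.2.1
    have hVW : ∀ i, V i ≤ W := fun i => i.2.2.choose
    have hcov : ∀ z ∈ W, ∃ i, z ∈ V i := by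
      intro z hz
      obtain ⟨V', f, hf, hz'⟩ := hmem z hz
      obtain ⟨W', hW'B, hzW', hW'V'⟩ := Opens.isBasis_iff_nbhd.mp hB hz'
      refine ⟨⟨W', hW'B, le_trans hW'V' f.le, ?_⟩, hzW'⟩
      · have := (Presheaf.equalizerSieve x y).downward_closed hf (homOfLE hW'V')
        convert this using 2
        exact Subsingleton.elim _ _
    have hcomp : ∀ W' ∈ B, ∀ (i j) (h1 : W' ≤ V i) (h2 : W' ≤ V j),
        F.map (homOfLE h1).op (F.map (homOfLE (hVW i)).op x)
          = F.map (homOfLE h2).op (F.map (homOfLE (hVW j)).op x) := by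
      intro W' _ i j h1 h2
      rw [← CategoryTheory.comp_apply, ← CategoryTheory.comp_apply, ← F.map_comp, ← F.map_comp]
      rfl
    obtain ⟨t, _, huniq⟩ := hsheaf W hW ι V hVB hVW hcov
      (fun i => F.map (homOfLE (hVW i)).op x) hcomp
    have hx : x = t := huniq x (by
      intro i hi
      rfl)
    have hy : y = t := huniq y (by
      intro i hi
      exact (i.2.2.choose_spec).symm)
    rw [hx, hy]
  intro U hU
  rw [ConcreteCategory.isIso_iff_bijective]
  refine ⟨inj U hU, ?_⟩
  -- surjectivity
  intro t
  have hmem : Presheaf.imageSieve θ t ∈ J U := Presheaf.imageSieve_mem J θ t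
  let ι : Type := {V : Opens X // V ∈ B ∧ ∃ hVU : V ≤ U,
    (Presheaf.imageSieve θ t).arrows (homOfLE hVU)}
  let V : ι → Opens X := fun i => i.1
  have hVB : ∀ i, V i ∈ B := fun i => i.2.1
  have hVU : ∀ i, V i ≤ U := fun i => i.2.2.choose
  have harr : ∀ i, (Presheaf.imageSieve θ t).arrows (homOfLE (hVU i)) :=
    fun i => i.2.2.choose_spec
  have hcov : ∀ z ∈ U, ∃ i, z ∈ V i := by
    intro z hz
    obtain ⟨V', f, hf, hz'⟩ := hmem z hz
    obtain ⟨W', hW'B, hzW', hW'V'⟩ := Opens.isBasis_iff_nbhd.mp hB hz'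
    refine ⟨⟨W', hW'B, le_trans hW'V' f.le, ?_⟩, hzW'⟩
    · have := (Presheaf.imageSieve θ t).downward_closed hf (homOfLE hW'V')
      convert this using 2
      exact Subsingleton.elim _ _
  -- local preimages
  let s : ∀ i, F.obj (op (V i)) := fun i =>
    Presheaf.localPreimage θ t (homOfLE (hVU i)) (harr i)
  have hs : ∀ i, θ.app (op (V i)) (s i) = G.1.map (homOfLE (hVU i)).op t :=
    fun i => Presheaf.app_localPreimage θ t (homOfLE (hVU i)) (harr i)
  -- the preimages are compatible, by injectivity on basis elements
  have hnat : ∀ (W' V' : Opens X) (h : W' ≤ V') (a : F.obj (op V')),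
      θ.app (op W') (F.map (homOfLE h).op a)
        = G.1.map (homOfLE h).op (θ.app (op V') a) := by
    intro W' V' h a
    have := θ.naturality (homOfLE h).op
    exact congrFun (congrArg (fun (f : F.obj (op V') ⟶ G.1.obj (op W')) => (f : _ → _)) this) a
  have hcomp : ∀ W' ∈ B, ∀ (i j) (h1 : W' ≤ V i) (h2 : W' ≤ V j),
      F.map (homOfLE h1).op (s i) = F.map (homOfLE h2).op (s j) := by
    intro W' hW' i j h1 h2
    apply inj W' hW'
    rw [hnat W' (V i) h1 (s i), hnat W' (V j) h2 (s j), hs i, hs j,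
      ← CategoryTheory.comp_apply, ← CategoryTheory.comp_apply,
      ← G.1.map_comp, ← G.1.map_comp]
    rfl
  obtain ⟨t₀, ht₀, -⟩ := hsheaf U hU ι V hVB hVU hcov s hcomp
  refine ⟨t₀, ?_⟩
  -- sections of the sheaf `G` are determined on the covering
  apply G.eq_of_locally_eq' V U (fun i => homOfLE (hVU i))
    (fun z hz => Opens.mem_iSup.mpr (hcov z hz))
  intro i
  show (G.1.map (homOfLE (hVU i)).op) ((θ.app (op U)) t₀)
    = (G.1.map (homOfLE (hVU i)).op) t
  rw [← hnat (V i) U (hVU i) t₀, ht₀ i (hVU i), hs i]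
end
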